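/- In the binary logit dyadic model, suppose there exist constants C ≥ 1 and ρ > 0 such that ‖R_{ij}‖ ≤ C and p_{ij} ≤ Cρ almost surely. Then there is a constant C' depending only on C such that ‖Σ1c‖ ≤ C'ρ², ‖Σ1p‖ ≤ C'ρ², ‖Σ2‖ ≤ C'ρ², and ‖Σ3‖ ≤ C'ρ (matrix norms), i.e. the Hajek-projection variance components are of order ρ² while the purely idiosyncratic component is of order ρ. -/

import Mathlib

open MeasureTheory ProbabilityTheory Filter
open scoped BigOperators NNReal Topology

namespace SparseNet

/-- Index type for the three independent families of the dyadic setup: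
consumer draws `(W_i, A_i)`, product draws `(X_j, B_j)` and idiosyncratic
draws `V_{ij}`. -/
abbrev Idx : Type := ℕ ⊕ ℕ ⊕ (ℕ × ℕ)

/-- Codomain of each member of the combined family. -/
def idxType (𝒲 𝒜 𝒳 ℬ 𝒱 : Type) : Idx → Type
  | Sum.inl _ => 𝒲 × 𝒜
  | Sum.inr (Sum.inl _) => 𝒳 × ℬ
  | Sum.inr (Sum.inr _) => 𝒱

/-- Measurable-space structure on the codomains. -/
def idxMS {𝒲 𝒜 𝒳 ℬ 𝒱 : Type} [MeasurableSpace 𝒲] [MeasurableSpace 𝒜]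
    [MeasurableSpace 𝒳] [MeasurableSpace ℬ] [MeasurableSpace 𝒱] :
    ∀ t : Idx, MeasurableSpace (idxType 𝒲 𝒜 𝒳 ℬ 𝒱 t)
  | Sum.inl _ => inferInstanceAs (MeasurableSpace (𝒲 × 𝒜))
  | Sum.inr (Sum.inl _) => inferInstanceAs (MeasurableSpace (𝒳 × ℬ))
  | Sum.inr (Sum.inr _) => inferInstanceAs (MeasurableSpace 𝒱)

/-- The combined family of random elements. -/
def fam {Ω 𝒲 𝒜 𝒳 ℬ 𝒱 : Type} (W : ℕ → Ω → 𝒲) (A : ℕ → Ω → 𝒜) (X : ℕ → Ω → 𝒳)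
    (B : ℕ → Ω → ℬ) (V : ℕ → ℕ → Ω → 𝒱) :
    ∀ t : Idx, Ω → idxType 𝒲 𝒜 𝒳 ℬ 𝒱 t
  | Sum.inl i => fun ω => (W i ω, A i ω)
  | Sum.inr (Sum.inl j) => fun ω => (X j ω, B j ω)
  | Sum.inr (Sum.inr ij) => V ij.1 ij.2

variable {Ω 𝒲 𝒜 𝒳 ℬ 𝒱 : Type} [MeasurableSpace Ω] [MeasurableSpace 𝒲]
  [MeasurableSpace 𝒜] [MeasurableSpace 𝒳] [MeasurableSpace ℬ] [MeasurableSpace 𝒱]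

/-- The dyadic setup: `(W_i, A_i)_{i≥1}` i.i.d., `(X_j, B_j)_{j≥1}` i.i.d.,
`(V_{ij})_{i,j≥1}` i.i.d., the three families mutually independent. -/
structure DyadicSetup (μ : Measure Ω) (W : ℕ → Ω → 𝒲) (A : ℕ → Ω → 𝒜)
    (X : ℕ → Ω → 𝒳) (B : ℕ → Ω → ℬ) (V : ℕ → ℕ → Ω → 𝒱) : Prop where
  measW : ∀ i, Measurable (W i)
  measA : ∀ i, Measurable (A i)
  measX : ∀ j, Measurable (X j)
  measB : ∀ j, Measurable (B j)
  measV : ∀ i j, Measurable (V i j)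
  indep : iIndepFun (m := idxMS) (fam W A X B V) μ
  identWA : ∀ i, IdentDistrib (fun ω => (W i ω, A i ω)) (fun ω => (W 1 ω, A 1 ω)) μ μ
  identXB : ∀ j, IdentDistrib (fun ω => (X j ω, B j ω)) (fun ω => (X 1 ω, B 1 ω)) μ μ
  identV : ∀ i j, IdentDistrib (V i j) (V 1 1) μ μ

variable (μ : Measure Ω) {k : ℕ}

/-- The logistic function `e(v) = exp(v)/(1 + exp(v))`. -/
noncomputable def logistic (v : ℝ) : ℝ := Real.exp v / (1 + Real.exp v)

/-- The binary outcome `Y_{ij} = h(W_i, X_j, A_i, B_j, V_{ij}) ∈ {0,1}`. -/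
def Yb (h : 𝒲 → 𝒳 → 𝒜 → ℬ → 𝒱 → ℝ) (W : ℕ → Ω → 𝒲) (A : ℕ → Ω → 𝒜)
    (X : ℕ → Ω → 𝒳) (B : ℕ → Ω → ℬ) (V : ℕ → ℕ → Ω → 𝒱) (i j : ℕ) : Ω → ℝ :=
  fun ω => h (W i ω) (X j ω) (A i ω) (B j ω) (V i j ω)

/-- The regressor vector `R_{ij} = (1, z(W_i, X_j)')'`. -/
def Rreg (z : 𝒲 → 𝒳 → Fin k → ℝ) (W : ℕ → Ω → 𝒲) (X : ℕ → Ω → 𝒳)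
    (i j : ℕ) : Ω → Fin (k + 1) → ℝ :=
  fun ω => Fin.cons 1 (z (W i ω) (X j ω))

/-- `e_{ij} = E[Y_{ij} | W_i, X_j]`. -/
noncomputable def eCEF (h : 𝒲 → 𝒳 → 𝒜 → ℬ → 𝒱 → ℝ) (W : ℕ → Ω → 𝒲)
    (A : ℕ → Ω → 𝒜) (X : ℕ → Ω → 𝒳) (B : ℕ → Ω → ℬ) (V : ℕ → ℕ → Ω → 𝒱)
    (i j : ℕ) : Ω → ℝ :=
  μ[Yb h W A X B V i j | MeasurableSpace.comap (fun ω => (W i ω, X j ω)) inferInstance]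

/-- `p_{ij} = E[Y_{ij} | W_i, X_j, A_i, B_j]`. -/
noncomputable def pCEF (h : 𝒲 → 𝒳 → 𝒜 → ℬ → 𝒱 → ℝ) (W : ℕ → Ω → 𝒲)
    (A : ℕ → Ω → 𝒜) (X : ℕ → Ω → 𝒳) (B : ℕ → Ω → ℬ) (V : ℕ → ℕ → Ω → 𝒱)
    (i j : ℕ) : Ω → ℝ :=
  μ[Yb h W A X B V i j |
    MeasurableSpace.comap (fun ω => (W i ω, X j ω, A i ω, B j ω)) inferInstance]

/-- The score `s_{ij} = (Y_{ij} − e_{ij}) R_{ij}`. -/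
noncomputable def scoreL (h : 𝒲 → 𝒳 → 𝒜 → ℬ → 𝒱 → ℝ) (z : 𝒲 → 𝒳 → Fin k → ℝ)
    (W : ℕ → Ω → 𝒲) (A : ℕ → Ω → 𝒜) (X : ℕ → Ω → 𝒳) (B : ℕ → Ω → ℬ)
    (V : ℕ → ℕ → Ω → 𝒱) (i j : ℕ) : Ω → Fin (k + 1) → ℝ :=
  fun ω a => (Yb h W A X B V i j ω - eCEF μ h W A X B V i j ω) * Rreg z W X i j ω a

/-- `s̄_{ij} = E[s_{ij} | W_i, X_j, A_i, B_j]`. -/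
noncomputable def sbarL (h : 𝒲 → 𝒳 → 𝒜 → ℬ → 𝒱 → ℝ) (z : 𝒲 → 𝒳 → Fin k → ℝ)
    (W : ℕ → Ω → 𝒲) (A : ℕ → Ω → 𝒜) (X : ℕ → Ω → 𝒳) (B : ℕ → Ω → ℬ)
    (V : ℕ → ℕ → Ω → 𝒱) (i j : ℕ) : Ω → Fin (k + 1) → ℝ :=
  μ[scoreL μ h z W A X B V i j |
    MeasurableSpace.comap (fun ω => (W i ω, X j ω, A i ω, B j ω)) inferInstance]

/-- `s̄c_i = E[s̄_{i1} | W_i, A_i]`. -/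
noncomputable def sbarcL (h : 𝒲 → 𝒳 → 𝒜 → ℬ → 𝒱 → ℝ) (z : 𝒲 → 𝒳 → Fin k → ℝ)
    (W : ℕ → Ω → 𝒲) (A : ℕ → Ω → 𝒜) (X : ℕ → Ω → 𝒳) (B : ℕ → Ω → ℬ)
    (V : ℕ → ℕ → Ω → 𝒱) (i : ℕ) : Ω → Fin (k + 1) → ℝ :=
  μ[sbarL μ h z W A X B V i 1 |
    MeasurableSpace.comap (fun ω => (W i ω, A i ω)) inferInstance]

/-- `s̄p_j = E[s̄_{1j} | X_j, B_j]`. -/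
noncomputable def sbarpL (h : 𝒲 → 𝒳 → 𝒜 → ℬ → 𝒱 → ℝ) (z : 𝒲 → 𝒳 → Fin k → ℝ)
    (W : ℕ → Ω → 𝒲) (A : ℕ → Ω → 𝒜) (X : ℕ → Ω → 𝒳) (B : ℕ → Ω → ℬ)
    (V : ℕ → ℕ → Ω → 𝒱) (j : ℕ) : Ω → Fin (k + 1) → ℝ :=
  μ[sbarL μ h z W A X B V 1 j |
    MeasurableSpace.comap (fun ω => (X j ω, B j ω)) inferInstance]

/-- The (cross-)covariance matrix `E[f h']` of two mean-zero random vectors. -/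
noncomputable def covMat {d : ℕ} (f h : Ω → Fin d → ℝ) : Matrix (Fin d) (Fin d) ℝ :=
  Matrix.of fun a b => ∫ ω, f ω a * h ω b ∂μ

/-- `Σ1c = E[s̄c_1 (s̄c_1)']`. -/
noncomputable def SigCL (h : 𝒲 → 𝒳 → 𝒜 → ℬ → 𝒱 → ℝ) (z : 𝒲 → 𝒳 → Fin k → ℝ)
    (W : ℕ → Ω → 𝒲) (A : ℕ → Ω → 𝒜) (X : ℕ → Ω → 𝒳) (B : ℕ → Ω → ℬ)
    (V : ℕ → ℕ → Ω → 𝒱) : Matrix (Fin (k + 1)) (Fin (k + 1)) ℝ :=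
  covMat μ (sbarcL μ h z W A X B V 1) (sbarcL μ h z W A X B V 1)

/-- `Σ1p = E[s̄p_1 (s̄p_1)']`. -/
noncomputable def SigPL (h : 𝒲 → 𝒳 → 𝒜 → ℬ → 𝒱 → ℝ) (z : 𝒲 → 𝒳 → Fin k → ℝ)
    (W : ℕ → Ω → 𝒲) (A : ℕ → Ω → 𝒜) (X : ℕ → Ω → 𝒳) (B : ℕ → Ω → ℬ)
    (V : ℕ → ℕ → Ω → 𝒱) : Matrix (Fin (k + 1)) (Fin (k + 1)) ℝ :=
  covMat μ (sbarpL μ h z W A X B V 1) (sbarpL μ h z W A X B V 1)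

/-- `Σ2 = E[s̄_{11} (s̄_{11})']`. -/
noncomputable def Sig2L (h : 𝒲 → 𝒳 → 𝒜 → ℬ → 𝒱 → ℝ) (z : 𝒲 → 𝒳 → Fin k → ℝ)
    (W : ℕ → Ω → 𝒲) (A : ℕ → Ω → 𝒜) (X : ℕ → Ω → 𝒳) (B : ℕ → Ω → ℬ)
    (V : ℕ → ℕ → Ω → 𝒱) : Matrix (Fin (k + 1)) (Fin (k + 1)) ℝ :=
  covMat μ (sbarL μ h z W A X B V 1 1) (sbarL μ h z W A X B V 1 1)

/-- `Σ3 = E[(s_{11} − s̄_{11})(s_{11} − s̄_{11})']`. -/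
noncomputable def Sig3L (h : 𝒲 → 𝒳 → 𝒜 → ℬ → 𝒱 → ℝ) (z : 𝒲 → 𝒳 → Fin k → ℝ)
    (W : ℕ → Ω → 𝒲) (A : ℕ → Ω → 𝒜) (X : ℕ → Ω → 𝒳) (B : ℕ → Ω → ℬ)
    (V : ℕ → ℕ → Ω → 𝒱) : Matrix (Fin (k + 1)) (Fin (k + 1)) ℝ :=
  covMat μ (fun ω => scoreL μ h z W A X B V 1 1 ω - sbarL μ h z W A X B V 1 1 ω)
    (fun ω => scoreL μ h z W A X B V 1 1 ω - sbarL μ h z W A X B V 1 1 ω)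

/-- Euclidean norm of a real vector. -/
noncomputable def euclNorm {m : ℕ} (v : Fin m → ℝ) : ℝ :=
  Real.sqrt (∑ a, (v a) ^ 2)

/-! Everything is controlled by the two success probabilities `p = E[Y | W, X, A, B]` and
`e = E[Y | W, X] = E[p | W, X]`: both lie in `[0, 1]` and inherit the bound `Cρ` from `p`.
The score obeys `‖s‖ ≤ C (Y + e)`, so its conditional expectation `s̄` is bounded by
`C (p + e) ≤ 2C²ρ`, and so are the further projections `s̄c`, `s̄p`; this gives the `ρ²` bounds.
In `Σ3`, bound one factor of `(s − s̄)(s − s̄)'` by `4C` and the other by `C (Y + p + 2e)`,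
whose mean is `4C E[Y] = 4C E[p] ≤ 4C²ρ`. -/

lemma norm_le_euclNorm {m : ℕ} (v : Fin m → ℝ) : ‖v‖ ≤ euclNorm v := by
  refine (pi_norm_le_iff_of_nonneg (Real.sqrt_nonneg _)).2 fun a => ?_
  rw [Real.norm_eq_abs, ← Real.sqrt_sq_eq_abs]
  exact Real.sqrt_le_sqrt (Finset.single_le_sum (fun b _ => sq_nonneg (v b)) (Finset.mem_univ a))

section Integral

variable {α : Type*} {m0 : MeasurableSpace α} {μ : Measure α}

lemma abs_integral_mul_le {f g D : α → ℝ} {M : ℝ} (hD : Integrable D μ)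
    (hf : ∀ᵐ ω ∂μ, |f ω| ≤ M) (hg : ∀ᵐ ω ∂μ, |g ω| ≤ D ω) :
    |∫ ω, f ω * g ω ∂μ| ≤ M * ∫ ω, D ω ∂μ := by
  have hfg : ∀ᵐ ω ∂μ, ‖f ω * g ω‖ ≤ M * D ω := by
    filter_upwards [hf, hg] with ω hfω hgω
    rw [norm_mul]
    exact mul_le_mul hfω hgω (abs_nonneg _) ((abs_nonneg _).trans hfω)
  rw [← integral_const_mul, ← Real.norm_eq_abs]
  exact norm_integral_le_of_norm_le (hD.const_mul M) hfg

lemma ae_condExp_mem_Icc {m : MeasurableSpace α} {Y : α → ℝ}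
    (hY : ∀ᵐ ω ∂μ, Y ω ∈ Set.Icc 0 1) : ∀ᵐ ω ∂μ, μ[Y | m] ω ∈ Set.Icc 0 1 := by
  filter_upwards [condExp_nonneg (m := m) (hY.mono fun _ h => h.1),
    condExp_le_nonneg_const (m := m) zero_le_one (hY.mono fun _ h => h.2)] with ω h0 h1
  exact ⟨h0, h1⟩

end Integral

variable {μ}

lemma abs_covMat_apply_le_of_norm_le [IsProbabilityMeasure μ] {d : ℕ} {f g : Ω → Fin d → ℝ}
    {M N : ℝ} (hf : ∀ᵐ ω ∂μ, ‖f ω‖ ≤ M) (hg : ∀ᵐ ω ∂μ, ‖g ω‖ ≤ N) (a b : Fin d) :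
    |covMat μ f g a b| ≤ M * N := by
  simpa [covMat] using abs_integral_mul_le (integrable_const N)
    (hf.mono fun ω h => (norm_le_pi_norm (f ω) a).trans h)
    (hg.mono fun ω h => (norm_le_pi_norm (g ω) b).trans h)

section Score

variable {α ι : Type*} [Fintype ι] {mF mG m0 : MeasurableSpace α} {μ : Measure α}
  {Y : α → ℝ} {R : α → ι → ℝ} {C c : ℝ}

noncomputable def score (μ : Measure α) (mF : MeasurableSpace α) (Y : α → ℝ) (R : α → ι → ℝ) :
    α → ι → ℝ :=
  fun ω => (Y ω - μ[Y | mF] ω) • R ω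

lemma ae_condExp_le_of_condExp_le [IsFiniteMeasure μ] (hFG : mF ≤ mG) (hG : mG ≤ m0) (hc : 0 ≤ c)
    (hp : ∀ᵐ ω ∂μ, μ[Y | mG] ω ≤ c) : ∀ᵐ ω ∂μ, μ[Y | mF] ω ≤ c := by
  filter_upwards [condExp_condExp_of_le (f := Y) (μ := μ) hFG hG,
    condExp_le_nonneg_const (m := mF) hc hp] with ω htower hle
  rwa [← htower]

lemma norm_score_le (hY : ∀ᵐ ω ∂μ, Y ω ∈ Set.Icc 0 1) (hR : ∀ᵐ ω ∂μ, ‖R ω‖ ≤ C) :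
    ∀ᵐ ω ∂μ, ‖score μ mF Y R ω‖ ≤ C * (Y ω + μ[Y | mF] ω) := by
  filter_upwards [hY, hR, ae_condExp_mem_Icc (m := mF) hY] with ω hYω hRω heω
  rw [score, norm_smul, Real.norm_eq_abs, mul_comm]
  have hYe : |Y ω - μ[Y | mF] ω| ≤ Y ω + μ[Y | mF] ω :=
    abs_le.2 ⟨by linarith [hYω.1], by linarith [heω.1]⟩
  exact mul_le_mul hRω hYe (abs_nonneg _) ((norm_nonneg _).trans hRω)

lemma integrable_score [IsFiniteMeasure μ] (hYi : Integrable Y μ) (hY : ∀ᵐ ω ∂μ, Y ω ∈ Set.Icc 0 1)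
    (hRm : AEStronglyMeasurable R μ) (hR : ∀ᵐ ω ∂μ, ‖R ω‖ ≤ C) :
    Integrable (score μ mF Y R) μ :=
  Integrable.mono' ((hYi.add integrable_condExp).const_mul C)
    ((hYi.1.sub integrable_condExp.1).smul hRm) (norm_score_le hY hR)

lemma norm_condExp_score_le [IsFiniteMeasure μ] (hFG : mF ≤ mG) (hG : mG ≤ m0)
    (hYi : Integrable Y μ) (hY : ∀ᵐ ω ∂μ, Y ω ∈ Set.Icc 0 1)
    (hRm : AEStronglyMeasurable R μ) (hR : ∀ᵐ ω ∂μ, ‖R ω‖ ≤ C) :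
    ∀ᵐ ω ∂μ, ‖μ[score μ mF Y R | mG] ω‖ ≤ C * (μ[Y | mG] ω + μ[Y | mF] ω) := by
  have he : μ[μ[Y | mF] | mG] = μ[Y | mF] :=
    condExp_of_stronglyMeasurable hG (stronglyMeasurable_condExp.mono hFG) integrable_condExp
  have hmono := condExp_mono (m := mG) (integrable_score (mF := mF) hYi hY hRm hR).norm
    ((hYi.add (integrable_condExp (m := mF))).const_mul C) (norm_score_le hY hR)
  filter_upwards [norm_condExp_le (m := mG) (μ := μ) (score μ mF Y R), hmono,
    condExp_smul (m := mG) C (Y + μ[Y | mF]), condExp_add hYi (integrable_condExp (m := mF)) mG]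
    with ω hnorm hle hsmul hadd
  refine hnorm.trans (hle.trans_eq ?_)
  change μ[C • (Y + μ[Y | mF]) | mG] ω = _
  rw [hsmul, Pi.smul_apply, hadd, Pi.add_apply, he, smul_eq_mul]

lemma norm_condExp_score_le_of_condExp_le [IsFiniteMeasure μ] (hFG : mF ≤ mG) (hG : mG ≤ m0)
    (hYi : Integrable Y μ) (hY : ∀ᵐ ω ∂μ, Y ω ∈ Set.Icc 0 1)
    (hRm : AEStronglyMeasurable R μ) (hR : ∀ᵐ ω ∂μ, ‖R ω‖ ≤ C) (hc : 0 ≤ c)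
    (hp : ∀ᵐ ω ∂μ, μ[Y | mG] ω ≤ c) :
    ∀ᵐ ω ∂μ, ‖μ[score μ mF Y R | mG] ω‖ ≤ 2 * C * c := by
  filter_upwards [norm_condExp_score_le hFG hG hYi hY hRm hR, hp,
    ae_condExp_le_of_condExp_le hFG hG hc hp, hR] with ω hs hpω heω hRω
  have hC : 0 ≤ C := (norm_nonneg _).trans hRω
  nlinarith

lemma abs_integral_score_sub_condExp_mul_le [IsProbabilityMeasure μ] (hFG : mF ≤ mG)
    (hG : mG ≤ m0) (hYi : Integrable Y μ) (hY : ∀ᵐ ω ∂μ, Y ω ∈ Set.Icc 0 1)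
    (hRm : AEStronglyMeasurable R μ) (hR : ∀ᵐ ω ∂μ, ‖R ω‖ ≤ C)
    (hp : ∀ᵐ ω ∂μ, μ[Y | mG] ω ≤ c) (a b : ι) :
    |∫ ω, (score μ mF Y R ω a - μ[score μ mF Y R | mG] ω a) *
        (score μ mF Y R ω b - μ[score μ mF Y R | mG] ω b) ∂μ| ≤ 16 * C ^ 2 * c := by
  set s := score μ mF Y R
  set D : α → ℝ := fun ω => C * (Y ω + μ[Y | mF] ω) + C * (μ[Y | mG] ω + μ[Y | mF] ω)
  have hC : 0 ≤ C := by
    obtain ⟨ω, hω⟩ := hR.exists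
    exact (norm_nonneg _).trans hω
  have hsD : ∀ᵐ ω ∂μ, ‖s ω - μ[s | mG] ω‖ ≤ D ω := by
    filter_upwards [norm_score_le hY hR, norm_condExp_score_le hFG hG hYi hY hRm hR]
      with ω hs hsb
    exact (norm_sub_le _ _).trans (add_le_add hs hsb)
  have hD : ∀ᵐ ω ∂μ, D ω ≤ 4 * C := by
    filter_upwards [hY, ae_condExp_mem_Icc (m := mF) hY, ae_condExp_mem_Icc (m := mG) hY]
      with ω hYω heω hpω
    have hsum : Y ω + μ[Y | mF] ω + (μ[Y | mG] ω + μ[Y | mF] ω) ≤ 4 := by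
      linarith [hYω.2, heω.2, hpω.2]
    calc D ω = C * (Y ω + μ[Y | mF] ω + (μ[Y | mG] ω + μ[Y | mF] ω)) := by ring
      _ ≤ C * 4 := mul_le_mul_of_nonneg_left hsum hC
      _ = 4 * C := mul_comm _ _
  have hYF : Integrable (μ[Y | mF]) μ := integrable_condExp
  have hYG : Integrable (μ[Y | mG]) μ := integrable_condExp
  have hDi : Integrable D μ := ((hYi.add hYF).const_mul C).add ((hYG.add hYF).const_mul C)
  have hintD : ∫ ω, D ω ∂μ = 4 * C * ∫ ω, Y ω ∂μ := by
    simp only [D]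
    rw [integral_add, integral_const_mul, integral_const_mul, integral_add hYi hYF,
      integral_add hYG hYF, integral_condExp hG, integral_condExp (hFG.trans hG)]
    · ring
    · exact (hYi.add hYF).const_mul C
    · exact (hYG.add hYF).const_mul C
  have hintY : ∫ ω, Y ω ∂μ ≤ c := by
    rw [← integral_condExp hG]
    simpa using integral_mono_ae integrable_condExp (integrable_const c) hp
  have hcoord : ∀ d : ι, ∀ᵐ ω ∂μ, |s ω d - μ[s | mG] ω d| ≤ D ω := fun d =>
    hsD.mono fun ω h => (norm_le_pi_norm (s ω - μ[s | mG] ω) d).trans h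
  calc _ ≤ 4 * C * ∫ ω, D ω ∂μ := abs_integral_mul_le hDi
          (by filter_upwards [hcoord a, hD] with ω h1 h2 using h1.trans h2) (hcoord b)
    _ = 16 * C ^ 2 * ∫ ω, Y ω ∂μ := by rw [hintD]; ring
    _ ≤ 16 * C ^ 2 * c := by gcongr

end Score

lemma comap_prodMk_le_comap_prodMk {α β γ δ : Type*} [MeasurableSpace β] [MeasurableSpace γ]
    [MeasurableSpace δ] (f : α → β) (g : α → γ) (r : α → δ) :
    MeasurableSpace.comap (fun ω => (f ω, g ω)) inferInstance ≤
      MeasurableSpace.comap (fun ω => (f ω, g ω, r ω)) inferInstance :=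
  ((measurable_fst.prodMk (measurable_fst.comp measurable_snd)).comp
    (comap_measurable fun ω => (f ω, g ω, r ω))).comap_le

section Model

variable {W : ℕ → Ω → 𝒲} {A : ℕ → Ω → 𝒜} {X : ℕ → Ω → 𝒳} {B : ℕ → Ω → ℬ}
  {V : ℕ → ℕ → Ω → 𝒱} {h : 𝒲 → 𝒳 → 𝒜 → ℬ → 𝒱 → ℝ} {z : 𝒲 → 𝒳 → Fin k → ℝ}

lemma DyadicSetup.measurable_Yb (hDS : DyadicSetup μ W A X B V)
    (hh : Measurable fun p : 𝒲 × 𝒳 × 𝒜 × ℬ × 𝒱 => h p.1 p.2.1 p.2.2.1 p.2.2.2.1 p.2.2.2.2)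
    (i j : ℕ) : Measurable (Yb h W A X B V i j) :=
  hh.comp ((hDS.measW i).prodMk
    ((hDS.measX j).prodMk ((hDS.measA i).prodMk ((hDS.measB j).prodMk (hDS.measV i j)))))

lemma DyadicSetup.measurable_Rreg (hDS : DyadicSetup μ W A X B V)
    (hz : Measurable fun p : 𝒲 × 𝒳 => z p.1 p.2) (i j : ℕ) : Measurable (Rreg z W X i j) :=
  measurable_pi_iff.2 (Fin.cases measurable_const fun a =>
    (measurable_pi_apply a).comp (hz.comp ((hDS.measW i).prodMk (hDS.measX j))))

end Model

/-- in the binary logit dyadic model with `‖R_{ij}‖ ≤ C` and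
`p_{ij} ≤ Cρ` a.s., there is a constant `C'` depending only on `C` with
`‖Σ1c‖ ≤ C'ρ²`, `‖Σ1p‖ ≤ C'ρ²`, `‖Σ2‖ ≤ C'ρ²` and `‖Σ3‖ ≤ C'ρ`
(entrywise, i.e. in the max matrix norm). -/
theorem statement6 (C : ℝ) (hC : 1 ≤ C) :
    ∃ C' : ℝ, 0 < C' ∧
      ∀ (Ω 𝒲 𝒜 𝒳 ℬ 𝒱 : Type) [MeasurableSpace Ω] [MeasurableSpace 𝒲]
        [MeasurableSpace 𝒜] [MeasurableSpace 𝒳] [MeasurableSpace ℬ]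
        [MeasurableSpace 𝒱] (μ : Measure Ω), IsProbabilityMeasure μ →
      ∀ (W : ℕ → Ω → 𝒲) (A : ℕ → Ω → 𝒜) (X : ℕ → Ω → 𝒳) (B : ℕ → Ω → ℬ)
        (V : ℕ → ℕ → Ω → 𝒱), DyadicSetup μ W A X B V →
      ∀ (k : ℕ) (h : 𝒲 → 𝒳 → 𝒜 → ℬ → 𝒱 → ℝ) (z : 𝒲 → 𝒳 → Fin k → ℝ),
        (Measurable fun p : 𝒲 × 𝒳 × 𝒜 × ℬ × 𝒱 =>
          h p.1 p.2.1 p.2.2.1 p.2.2.2.1 p.2.2.2.2) →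
        (Measurable fun p : 𝒲 × 𝒳 => z p.1 p.2) →
        (∀ w x a b v, h w x a b v = 0 ∨ h w x a b v = 1) →
      ∀ ρ : ℝ, 0 < ρ →
        (∀ i j : ℕ, ∀ᵐ ω ∂μ, euclNorm (Rreg z W X i j ω) ≤ C) →
        (∀ i j : ℕ, ∀ᵐ ω ∂μ, pCEF μ h W A X B V i j ω ≤ C * ρ) →
        (∀ a b, |SigCL μ h z W A X B V a b| ≤ C' * ρ ^ 2) ∧
        (∀ a b, |SigPL μ h z W A X B V a b| ≤ C' * ρ ^ 2) ∧
        (∀ a b, |Sig2L μ h z W A X B V a b| ≤ C' * ρ ^ 2) ∧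
        (∀ a b, |Sig3L μ h z W A X B V a b| ≤ C' * ρ) := by
  refine ⟨16 * C ^ 4, by positivity, ?_⟩
  intro Ω 𝒲 𝒜 𝒳 ℬ 𝒱 _ _ _ _ _ _ μ _ W A X B V hDS k h z hh hz h01 ρ hρ hR hp
  have hG := ((hDS.measW 1).prodMk
    ((hDS.measX 1).prodMk ((hDS.measA 1).prodMk (hDS.measB 1)))).comap_le
  have hFG := comap_prodMk_le_comap_prodMk (W 1) (X 1) fun ω => (A 1 ω, B 1 ω)
  have hY : ∀ᵐ ω ∂μ, Yb h W A X B V 1 1 ω ∈ Set.Icc 0 1 := ae_of_all _ fun ω => by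
    rcases h01 (W 1 ω) (X 1 ω) (A 1 ω) (B 1 ω) (V 1 1 ω) with h0 | h1 <;> simp [Yb, *]
  have hYi := Integrable.of_mem_Icc 0 1 (hDS.measurable_Yb hh 1 1).aemeasurable hY
  have hRm := (hDS.measurable_Rreg hz 1 1).aestronglyMeasurable (μ := μ)
  have hRC : ∀ᵐ ω ∂μ, ‖Rreg z W X 1 1 ω‖ ≤ C :=
    (hR 1 1).mono fun ω hω => (norm_le_euclNorm _).trans hω
  have hsb := norm_condExp_score_le_of_condExp_le hFG hG hYi hY hRm hRC (by positivity) (hp 1 1)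
  have hρ2 : 2 * C * (C * ρ) * (2 * C * (C * ρ)) ≤ 16 * C ^ 4 * ρ ^ 2 := by
    nlinarith [pow_pos (zero_lt_one.trans_le hC) 4, pow_pos hρ 2]
  refine ⟨fun a b => ?_, fun a b => ?_, fun a b => ?_, fun a b => ?_⟩
  · exact (abs_covMat_apply_le_of_norm_le (ae_bdd_norm_condExp_of_ae_bdd_norm hsb)
      (ae_bdd_norm_condExp_of_ae_bdd_norm hsb) a b).trans hρ2
  · exact (abs_covMat_apply_le_of_norm_le (ae_bdd_norm_condExp_of_ae_bdd_norm hsb)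
      (ae_bdd_norm_condExp_of_ae_bdd_norm hsb) a b).trans hρ2
  · exact (abs_covMat_apply_le_of_norm_le hsb hsb a b).trans hρ2
  · calc _ ≤ 16 * C ^ 2 * (C * ρ) :=
          abs_integral_score_sub_condExp_mul_le hFG hG hYi hY hRm hRC (hp 1 1) a b
      _ ≤ 16 * C ^ 4 * ρ := by
        nlinarith [mul_nonneg (mul_nonneg (pow_pos (zero_lt_one.trans_le hC) 3).le hρ.le)
          (sub_nonneg.2 hC)]

end SparseNet
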